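/- Every entry of a 2×2 matrix function with Schur function entries whose boundary values are unitary a.e. on an arc γ of the unit circle (and with not-identically-zero determinant) admits a pseudocontinuation of bounded type across γ. -/

import Mathlib

open MeasureTheory Filter Complex Set Matrix

noncomputable section

/-- The open unit disk. -/
def unitDisk : Set ℂ := {z : ℂ | ‖z‖ < 1}

/-- The exterior of the closed unit disk. -/
def extDisk : Set ℂ := {z : ℂ | 1 < ‖z‖}

/-- Point on the unit circle with angle `θ`. -/
def circlePt (θ : ℝ) : ℂ := Complex.exp (θ * Complex.I)

/-- One full period of angles, parametrizing the circle 𝕋. -/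
def circleSet : Set ℝ := Set.Ioc 0 (2 * Real.pi)

/-- `RadLim f θ w` : the radial (nontangential) boundary value of `f` (analytic in the
disk) at the boundary point `circlePt θ` exists and equals `w`. -/
def RadLim (f : ℂ → ℂ) (θ : ℝ) (w : ℂ) : Prop :=
  Filter.Tendsto (fun r : ℝ => f ((r : ℂ) * circlePt θ))
    (nhdsWithin 1 (Set.Iio 1)) (nhds w)

/-- `RadLimExt f θ w` : the radial boundary value of `f` (analytic in the exterior disk)
at the boundary point `circlePt θ`, taken from outside. -/
def RadLimExt (f : ℂ → ℂ) (θ : ℝ) (w : ℂ) : Prop :=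
  Filter.Tendsto (fun r : ℝ => f ((r : ℂ) * circlePt θ))
    (nhdsWithin 1 (Set.Ioi 1)) (nhds w)

/-- A Schur function: analytic on the unit disk and bounded by 1 in modulus. -/
def SchurFn (f : ℂ → ℂ) : Prop :=
  DifferentiableOn ℂ f unitDisk ∧ ∀ z ∈ unitDisk, ‖f z‖ ≤ 1

/-- The Nevanlinna class on a domain `Ω` : quotients of two bounded (contractive)
analytic functions, with not-identically-zero denominator. -/
def NevOn (Ω : Set ℂ) (f : ℂ → ℂ) : Prop :=
  ∃ f₁ f₂ : ℂ → ℂ, DifferentiableOn ℂ f₁ Ω ∧ DifferentiableOn ℂ f₂ Ω ∧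
    (∀ z ∈ Ω, ‖f₁ z‖ ≤ 1) ∧ (∀ z ∈ Ω, ‖f₂ z‖ ≤ 1) ∧
    (∃ z ∈ Ω, f₂ z ≠ 0) ∧ (∀ z ∈ Ω, f₂ z ≠ 0 → f z = f₁ z / f₂ z)

/-- An arc of the unit circle, described by its set of angles (one full period is
`Set.Ioo 0 (2π)` up to a null set, so the case γ = 𝕋 is not excluded). -/
def IsArc (γ : Set ℝ) : Prop :=
  ∃ a b : ℝ, 0 ≤ a ∧ a < b ∧ b ≤ 2 * Real.pi ∧ γ = Set.Ioo a b

/-- `f` admits a pseudocontinuation of bounded type across the arc with angle set `γ` :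
there is a Nevanlinna function on the exterior disk whose boundary values agree with
those of `f` a.e. on `γ`. -/
def PCArc (f : ℂ → ℂ) (γ : Set ℝ) : Prop :=
  ∃ ft : ℂ → ℂ, NevOn extDisk ft ∧
    ∀ᵐ θ ∂(volume.restrict γ), ∃ w : ℂ, RadLim f θ w ∧ RadLimExt ft θ w

/-- The boundary values of `f` exist and are unimodular a.e. on `γ`. -/
def UnimodularAEOn (f : ℂ → ℂ) (γ : Set ℝ) : Prop :=
  ∀ᵐ θ ∂(volume.restrict γ), ∃ w : ℂ, RadLim f θ w ∧ ‖w‖ = 1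

/-- The boundary values of the 2×2 matrix function `S` exist and are unitary a.e. on `γ`. -/
def UnitaryAEOn (S : ℂ → Matrix (Fin 2) (Fin 2) ℂ) (γ : Set ℝ) : Prop :=
  ∀ᵐ θ ∂(volume.restrict γ), ∃ W : Matrix (Fin 2) (Fin 2) ℂ,
    (∀ i j, RadLim (fun z => S z i j) θ (W i j)) ∧ Wᴴ * W = 1

/-- An outer function on the unit disk (normalized, with multiplicative constant 1):
`f z = exp (∫_𝕋 (t+z)/(t-z) φ(t) dm(t))` for some real integrable boundary data `φ`,
`m` being normalized Lebesgue measure on 𝕋. -/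
def IsOuter (f : ℂ → ℂ) : Prop :=
  ∃ φ : ℝ → ℝ, IntegrableOn φ circleSet ∧
    ∀ z ∈ unitDisk, f z =
      Complex.exp (∫ θ in circleSet,
        ((circlePt θ + z) / (circlePt θ - z)) * (φ θ : ℂ) / (2 * Real.pi))

/-!
On `γ` the boundary values `W` of `S` are unitary, so `W = (W⁻¹)ᴴ = (adj W)ᴴ / conj (det W)`.
Entries of `adj S` and `det S` are bounded analytic functions in the disk, and their reflections
`z ↦ conj (F (1 / conj z))` are bounded analytic functions in the exterior disk whose radial limits
are the conjugated boundary values. Hence `conj ((adj S)ⱼᵢ (1 / z̄)) / conj (det S (1 / z̄))` is a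
Nevanlinna function in the exterior disk matching `Sᵢⱼ` a.e. on `γ`.
-/

open ComplexConjugate Topology

lemma isOpen_unitDisk : IsOpen unitDisk := isOpen_lt continuous_norm continuous_const

lemma inv_conj_mem_unitDisk {z : ℂ} (hz : z ∈ extDisk) : (conj z)⁻¹ ∈ unitDisk := by
  have h : 1 < ‖z‖ := hz
  show ‖(conj z)⁻¹‖ < 1
  rw [norm_inv, RCLike.norm_conj]
  exact inv_lt_one_of_one_lt₀ h

lemma inv_conj_mem_extDisk {z : ℂ} (hz : z ∈ unitDisk) (hz0 : z ≠ 0) : (conj z)⁻¹ ∈ extDisk := by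
  have h : ‖z‖ < 1 := hz
  show 1 < ‖(conj z)⁻¹‖
  rw [norm_inv, RCLike.norm_conj]
  exact (one_lt_inv₀ (norm_pos_iff.mpr hz0)).mpr h

lemma conj_circlePt (θ : ℝ) : conj (circlePt θ) = (circlePt θ)⁻¹ := by
  rw [circlePt, ← Complex.exp_conj, ← Complex.exp_neg, map_mul, Complex.conj_ofReal,
    Complex.conj_I, mul_neg]

lemma tendsto_inv_nhdsGT_one : Tendsto (fun r : ℝ => r⁻¹) (𝓝[>] 1) (𝓝[<] 1) := by
  refine tendsto_nhdsWithin_of_tendsto_nhds_of_eventually_within _ ?_ ?_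
  · simpa using ((continuousAt_inv₀ one_ne_zero).tendsto (x := (1 : ℝ))).mono_left
      nhdsWithin_le_nhds
  · filter_upwards [self_mem_nhdsWithin] with r (hr : 1 < r)
    exact inv_lt_one_of_one_lt₀ hr

def circleReflect (F : ℂ → ℂ) : ℂ → ℂ := fun z => conj (F (conj z)⁻¹)

lemma circleReflect_eq_comp (F : ℂ → ℂ) : circleReflect F = (conj ∘ F ∘ conj) ∘ (·⁻¹) := by
  funext z
  simp [circleReflect, map_inv₀]

lemma circleReflect_ofReal_mul_circlePt (F : ℂ → ℂ) (r θ : ℝ) :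
    circleReflect F (r * circlePt θ) = conj (F ((r⁻¹ : ℝ) * circlePt θ)) := by
  rw [circleReflect, map_mul, conj_circlePt, Complex.conj_ofReal, mul_inv, inv_inv,
    Complex.ofReal_inv]

lemma norm_circleReflect (F : ℂ → ℂ) (z : ℂ) : ‖circleReflect F z‖ = ‖F (conj z)⁻¹‖ :=
  RCLike.norm_conj _

lemma DifferentiableOn.circleReflect {F : ℂ → ℂ} (hF : DifferentiableOn ℂ F unitDisk) :
    DifferentiableOn ℂ (circleReflect F) extDisk := by
  intro z hz
  have hz0 : z ≠ 0 := norm_pos_iff.mp (one_pos.trans hz)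
  have hmem : conj z⁻¹ ∈ unitDisk := by simpa [map_inv₀] using inv_conj_mem_unitDisk hz
  have hFz : DifferentiableAt ℂ (conj ∘ F ∘ conj) z⁻¹ :=
    differentiableAt_conj_conj_iff.mpr (hF.differentiableAt (isOpen_unitDisk.mem_nhds hmem))
  rw [circleReflect_eq_comp]
  exact (hFz.comp z (differentiableAt_inv hz0)).differentiableWithinAt

lemma RadLim.circleReflect {F : ℂ → ℂ} {θ : ℝ} {w : ℂ} (h : RadLim F θ w) :
    RadLimExt (circleReflect F) θ (conj w) := by
  have := (Complex.continuous_conj.tendsto w).comp (h.comp tendsto_inv_nhdsGT_one)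
  simpa only [RadLimExt, circleReflect_ofReal_mul_circlePt, Function.comp_def,
    Complex.ofReal_inv] using this

lemma exists_circleReflect_ne_zero {F : ℂ → ℂ} (hF : ContinuousOn F unitDisk)
    (h : ∃ z ∈ unitDisk, F z ≠ 0) : ∃ z ∈ extDisk, circleReflect F z ≠ 0 := by
  obtain ⟨z₀, hz₀, hFz₀⟩ := h
  obtain ⟨z, ⟨hz, hFz⟩, hz0 : z ≠ 0⟩ := (dense_compl_singleton (0 : ℂ)).inter_open_nonempty _
    (hF.isOpen_inter_preimage isOpen_unitDisk isOpen_compl_singleton) ⟨z₀, hz₀, hFz₀⟩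
  refine ⟨(conj z)⁻¹, inv_conj_mem_extDisk hz hz0, ?_⟩
  simpa [circleReflect, map_inv₀] using hFz

lemma nevOn_div {Ω : Set ℂ} {g d : ℂ → ℂ} {C : ℝ} (hg : DifferentiableOn ℂ g Ω)
    (hd : DifferentiableOn ℂ d Ω) (hgC : ∀ z ∈ Ω, ‖g z‖ ≤ C) (hdC : ∀ z ∈ Ω, ‖d z‖ ≤ C)
    (hd0 : ∃ z ∈ Ω, d z ≠ 0) : NevOn Ω fun z => g z / d z := by
  obtain ⟨z₀, hz₀, hdz₀⟩ := hd0
  have hC : 0 < C := (norm_pos_iff.mpr hdz₀).trans_le (hdC z₀ hz₀)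
  have hC' : (C : ℂ) ≠ 0 := Complex.ofReal_ne_zero.mpr hC.ne'
  have hnorm : ∀ y : ℂ, ‖y‖ ≤ C → ‖y / C‖ ≤ 1 := fun y hy => by
    rwa [norm_div, Complex.norm_of_nonneg hC.le, div_le_one hC]
  exact ⟨fun z => g z / C, fun z => d z / C, hg.div_const _, hd.div_const _,
    fun z hz => hnorm _ (hgC z hz), fun z hz => hnorm _ (hdC z hz),
    ⟨z₀, hz₀, div_ne_zero hdz₀ hC'⟩, fun z _ _ => (div_div_div_cancel_right₀ hC' _ _).symm⟩

theorem pcArc_of_radLim_eq_conj_div {f g d : ℂ → ℂ} {γ : Set ℝ} {C : ℝ}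
    (hg : DifferentiableOn ℂ g unitDisk) (hd : DifferentiableOn ℂ d unitDisk)
    (hgC : ∀ z ∈ unitDisk, ‖g z‖ ≤ C) (hdC : ∀ z ∈ unitDisk, ‖d z‖ ≤ C)
    (hd0 : ∃ z ∈ unitDisk, d z ≠ 0)
    (hbdry : ∀ᵐ θ ∂(volume.restrict γ), ∃ w u v : ℂ,
      RadLim f θ w ∧ RadLim g θ u ∧ RadLim d θ v ∧ v ≠ 0 ∧ w = conj u / conj v) :
    PCArc f γ := by
  have hreflect {F : ℂ → ℂ} (hF : ∀ z ∈ unitDisk, ‖F z‖ ≤ C) (z : ℂ) (hz : z ∈ extDisk) :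
      ‖circleReflect F z‖ ≤ C := by
    rw [norm_circleReflect]
    exact hF _ (inv_conj_mem_unitDisk hz)
  refine ⟨fun z => circleReflect g z / circleReflect d z,
    nevOn_div hg.circleReflect hd.circleReflect (hreflect hgC) (hreflect hdC)
      (exists_circleReflect_ne_zero hd.continuousOn hd0), ?_⟩
  filter_upwards [hbdry] with θ hθ
  obtain ⟨w, u, v, hfw, hgu, hdv, hv, rfl⟩ := hθ
  exact ⟨_, hfw, hgu.circleReflect.div hdv.circleReflect ((map_ne_zero _).mpr hv)⟩

namespace Matrix

variable {n : Type*} [Fintype n] [DecidableEq n]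

lemma adjugate_eq_det_smul_conjTranspose {R : Type*} [CommRing R] [StarRing R]
    {W : Matrix n n R} (h : Wᴴ * W = 1) : W.adjugate = W.det • Wᴴ := by
  calc W.adjugate = W.adjugate * (W * Wᴴ) := by rw [mul_eq_one_comm.mp h, Matrix.mul_one]
    _ = W.det • Wᴴ := by rw [← Matrix.mul_assoc, adjugate_mul, smul_mul, Matrix.one_mul]

lemma star_det_mul_det_of_conjTranspose_mul_self {R : Type*} [CommRing R] [StarRing R]
    {W : Matrix n n R} (h : Wᴴ * W = 1) : star W.det * W.det = 1 := by
  simpa [det_conjTranspose] using congrArg det h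

lemma apply_eq_conj_adjugate_div_conj_det {W : Matrix n n ℂ} (h : Wᴴ * W = 1) (i j : n) :
    W i j = conj (W.adjugate j i) / conj W.det := by
  have hdet : conj W.det ≠ 0 :=
    left_ne_zero_of_mul_eq_one (star_det_mul_det_of_conjTranspose_mul_self h)
  rw [eq_div_iff hdet, adjugate_eq_det_smul_conjTranspose h]
  simp [mul_comm]

variable {𝕜 : Type*} [NontriviallyNormedField 𝕜] {A : 𝕜 → Matrix n n 𝕜} {s : Set 𝕜}

lemma differentiableOn_det (h : ∀ i j, DifferentiableOn 𝕜 (fun z => A z i j) s) :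
    DifferentiableOn 𝕜 (fun z => (A z).det) s := by
  simp_rw [det_apply]
  exact DifferentiableOn.fun_sum fun σ _ =>
    (DifferentiableOn.fun_finsetProd fun i _ => h _ _).const_smul _

lemma differentiableOn_adjugate_apply (h : ∀ i j, DifferentiableOn 𝕜 (fun z => A z i j) s)
    (i j : n) : DifferentiableOn 𝕜 (fun z => (A z).adjugate i j) s := by
  simp_rw [adjugate_apply]
  refine differentiableOn_det fun k l => ?_
  simp_rw [updateRow_apply]
  split_ifs
  · exact differentiableOn_const _
  · exact h k l

lemma norm_det_le {A : Matrix n n 𝕜} (h : ∀ i j, ‖A i j‖ ≤ 1) :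
    ‖A.det‖ ≤ (Fintype.card n).factorial := by
  simpa using det_le (abv := IsAbsoluteValue.toAbsoluteValue (norm : 𝕜 → ℝ)) h

lemma norm_adjugate_apply_le {A : Matrix n n 𝕜} (h : ∀ i j, ‖A i j‖ ≤ 1) (i j : n) :
    ‖A.adjugate i j‖ ≤ (Fintype.card n).factorial := by
  rw [adjugate_apply]
  refine norm_det_le fun k l => ?_
  rw [updateRow_apply]
  split_ifs
  · rw [Pi.single_apply]; split_ifs <;> simp
  · exact h k l

end Matrix

lemma RadLim.comp_matrix {m n : Type*} {A : ℂ → Matrix m n ℂ} {W : Matrix m n ℂ} {θ : ℝ}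
    {Φ : Matrix m n ℂ → ℂ} (hΦ : ContinuousAt Φ W)
    (h : ∀ i j, RadLim (fun z => A z i j) θ (W i j)) : RadLim (fun z => Φ (A z)) θ (Φ W) :=
  hΦ.tendsto.comp (tendsto_pi_nhds.2 fun i => tendsto_pi_nhds.2 fun j => h i j)

theorem pcArc_apply_of_unitary_boundary {n : Type*} [Fintype n] [DecidableEq n]
    {S : ℂ → Matrix n n ℂ} {γ : Set ℝ} (hS : ∀ i j, SchurFn fun z => S z i j)
    (hdet : ∃ z ∈ unitDisk, (S z).det ≠ 0)
    (huni : ∀ᵐ θ ∂(volume.restrict γ), ∃ W : Matrix n n ℂ,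
      (∀ i j, RadLim (fun z => S z i j) θ (W i j)) ∧ Wᴴ * W = 1)
    (i j : n) : PCArc (fun z => S z i j) γ := by
  have hdiff i j := (hS i j).1
  have hbound z hz i j := (hS i j).2 z hz
  refine pcArc_of_radLim_eq_conj_div (Matrix.differentiableOn_adjugate_apply hdiff j i)
    (Matrix.differentiableOn_det hdiff)
    (fun z hz => Matrix.norm_adjugate_apply_le (hbound z hz) j i)
    (fun z hz => Matrix.norm_det_le (hbound z hz)) hdet ?_
  filter_upwards [huni] with θ ⟨W, hlim, hW⟩
  exact ⟨W i j, W.adjugate j i, W.det, hlim i j,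
    RadLim.comp_matrix (Φ := fun A => A.adjugate j i)
      ((continuous_apply_apply j i).comp continuous_id.matrix_adjugate).continuousAt hlim,
    RadLim.comp_matrix continuous_id.matrix_det.continuousAt hlim,
    fun h0 => by simpa [h0] using Matrix.star_det_mul_det_of_conjTranspose_mul_self hW,
    Matrix.apply_eq_conj_adjugate_div_conj_det hW i j⟩

theorem statement3_general (S : ℂ → Matrix (Fin 2) (Fin 2) ℂ) (γ : Set ℝ)
    (hS : ∀ i j, SchurFn fun z => S z i j)
    (hdet : ∃ z ∈ unitDisk, (S z).det ≠ 0)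
    (huni : UnitaryAEOn S γ) :
    ∀ i j, PCArc (fun z => S z i j) γ :=
  pcArc_apply_of_unitary_boundary hS hdet huni

/-- every entry of a 2×2 matrix function with Schur entries, unitary a.e.
on the arc `γ` and with not-identically-zero determinant, admits a pseudocontinuation
of bounded type across `γ`. -/
theorem statement3 (S : ℂ → Matrix (Fin 2) (Fin 2) ℂ) (γ : Set ℝ) (hγ : IsArc γ)
    (hS : ∀ i j, SchurFn fun z => S z i j)
    (hdet : ∃ z ∈ unitDisk, (S z).det ≠ 0)
    (huni : UnitaryAEOn S γ) :
    ∀ i j, PCArc (fun z => S z i j) γ :=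
  statement3_general S γ hS hdet huni
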